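/- Let (H,α) be a Hom-bialgebra and σ: H⊗H → k a linear map with σ∘(α⊗α) = σ. The multiplication h·_σ g = σ(h₁,g₁)α⁻¹(h₂g₂) on H is Hom-associative (with respect to α) if and only if σ is a left Hom-2-cocycle, i.e. σ(l₁,k₁)σ(α²(h), l₂k₂) = σ(h₁,l₁)σ(h₂l₂, α²(k)) for all h,k,l ∈ H. -/

import Mathlib

open scoped TensorProduct BigOperators

universe u v

/-- A Hom-Hopf algebra over a field `k`, with a chosen Sweedler-type
decomposition (`Idx`, `T`, `d1`, `d2`) of the comultiplication:
`comul h = ∑ i in T h, d1 h i ⊗ₜ d2 h i`.  The structure map `α` is assumed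
bijective (a linear equivalence), as throughout the paper. -/
structure HomHopf (k : Type u) (H : Type v) [Field k] [AddCommGroup H] [Module k H] where
  mul : H →ₗ[k] H →ₗ[k] H
  one : H
  α : H ≃ₗ[k] H
  comul : H →ₗ[k] H ⊗[k] H
  counit : H →ₗ[k] k
  S : H →ₗ[k] H
  Idx : Type v
  T : H → Finset Idx
  d1 : H → Idx → H
  d2 : H → Idx → H
  repr : ∀ h, comul h = ∑ i ∈ T h, d1 h i ⊗ₜ[k] d2 h i
  α_one : α one = one
  α_mul : ∀ x y, α (mul x y) = mul (α x) (α y)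
  one_mul : ∀ x, mul one x = α x
  mul_one : ∀ x, mul x one = α x
  hom_assoc : ∀ x y z, mul (α x) (mul y z) = mul (mul x y) (α z)
  counit_α : ∀ h, counit (α h) = counit h
  comul_α : ∀ h, comul (α h) = ∑ i ∈ T h, α (d1 h i) ⊗ₜ[k] α (d2 h i)
  counit_left : ∀ h, ∑ i ∈ T h, counit (d1 h i) • d2 h i = α h
  counit_right : ∀ h, ∑ i ∈ T h, counit (d2 h i) • d1 h i = α h
  hom_coassoc : ∀ h,
    (TensorProduct.assoc k H H H) (∑ i ∈ T h, comul (d1 h i) ⊗ₜ[k] α (d2 h i))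
      = ∑ i ∈ T h, α (d1 h i) ⊗ₜ[k] comul (d2 h i)
  counit_one : counit one = 1
  counit_mul : ∀ x y, counit (mul x y) = counit x * counit y
  comul_one : comul one = one ⊗ₜ[k] one
  comul_mul : ∀ x y, comul (mul x y)
      = ∑ i ∈ T x, ∑ j ∈ T y, mul (d1 x i) (d1 y j) ⊗ₜ[k] mul (d2 x i) (d2 y j)
  S_α : ∀ h, S (α h) = α (S h)
  S_left : ∀ h, ∑ i ∈ T h, mul (S (d1 h i)) (d2 h i) = counit h • one
  S_right : ∀ h, ∑ i ∈ T h, mul (d1 h i) (S (d2 h i)) = counit h • one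

/-- A unital Hom-associative algebra with bijective structure map. -/
structure HomAlg (k : Type u) (A : Type v) [Field k] [AddCommGroup A] [Module k A] where
  mul : A →ₗ[k] A →ₗ[k] A
  one : A
  β : A ≃ₗ[k] A
  β_one : β one = one
  β_mul : ∀ x y, β (mul x y) = mul (β x) (β y)
  one_mul : ∀ x, mul one x = β x
  mul_one : ∀ x, mul x one = β x
  hom_assoc : ∀ x y z, mul (β x) (mul y z) = mul (mul x y) (β z)

section Lazy

variable {k : Type u} {H : Type v} [Field k] [AddCommGroup H] [Module k H]

/-- `σ ∘ (α ⊗ α) = σ`. -/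
def AlphaInvariant2 (HH : HomHopf k H) (σ : H → H → k) : Prop :=
  ∀ h g, σ (HH.α h) (HH.α g) = σ h g

/-- The left Hom-2-cocycle equation
`σ(l₁,k₁)σ(α²(h), l₂k₂) = σ(h₁,l₁)σ(h₂l₂, α²(k))`. -/
def LeftCocycleEq (HH : HomHopf k H) (σ : H → H → k) : Prop :=
  ∀ h l m, ∑ j ∈ HH.T l, ∑ n ∈ HH.T m,
      σ (HH.d1 l j) (HH.d1 m n) * σ (HH.α (HH.α h)) (HH.mul (HH.d2 l j) (HH.d2 m n))
    = ∑ i ∈ HH.T h, ∑ j ∈ HH.T l,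
      σ (HH.d1 h i) (HH.d1 l j) * σ (HH.mul (HH.d2 h i) (HH.d2 l j)) (HH.α (HH.α m))

/-- The right Hom-2-cocycle equation
`σ(α²(h), l₁k₁)σ(l₂,k₂) = σ(h₁l₁, α²(k))σ(h₂,l₂)`. -/
def RightCocycleEq (HH : HomHopf k H) (σ : H → H → k) : Prop :=
  ∀ h l m, ∑ j ∈ HH.T l, ∑ n ∈ HH.T m,
      σ (HH.α (HH.α h)) (HH.mul (HH.d1 l j) (HH.d1 m n)) * σ (HH.d2 l j) (HH.d2 m n)
    = ∑ i ∈ HH.T h, ∑ j ∈ HH.T l,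
      σ (HH.mul (HH.d1 h i) (HH.d1 l j)) (HH.α (HH.α m)) * σ (HH.d2 h i) (HH.d2 l j)

/-- A left Hom-2-cocycle. -/
def IsLeftCocycle (HH : HomHopf k H) (σ : H → H → k) : Prop :=
  AlphaInvariant2 HH σ ∧ LeftCocycleEq HH σ

/-- A right Hom-2-cocycle. -/
def IsRightCocycle (HH : HomHopf k H) (σ : H → H → k) : Prop :=
  AlphaInvariant2 HH σ ∧ RightCocycleEq HH σ

/-- `σ` is normalized: `σ(1,h) = σ(h,1) = ε(h)`. -/
def Normalized2 (HH : HomHopf k H) (σ : H → H → k) : Prop :=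
  (∀ h, σ HH.one h = HH.counit h) ∧ (∀ h, σ h HH.one = HH.counit h)

/-- `τ` is the convolution inverse of `σ : H ⊗ H → k`. -/
def ConvInv2 (HH : HomHopf k H) (σ τ : H → H → k) : Prop :=
  (∀ h g, ∑ i ∈ HH.T h, ∑ j ∈ HH.T g,
      σ (HH.d1 h i) (HH.d1 g j) * τ (HH.d2 h i) (HH.d2 g j) = HH.counit h * HH.counit g) ∧
  (∀ h g, ∑ i ∈ HH.T h, ∑ j ∈ HH.T g,
      τ (HH.d1 h i) (HH.d1 g j) * σ (HH.d2 h i) (HH.d2 g j) = HH.counit h * HH.counit g)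

/-- `σ` is lazy: `σ(h₁,g₁)h₂g₂ = h₁g₁σ(h₂,g₂)`. -/
def IsLazy2 (HH : HomHopf k H) (σ : H → H → k) : Prop :=
  ∀ h g, ∑ i ∈ HH.T h, ∑ j ∈ HH.T g,
      σ (HH.d1 h i) (HH.d1 g j) • HH.mul (HH.d2 h i) (HH.d2 g j)
    = ∑ i ∈ HH.T h, ∑ j ∈ HH.T g,
      σ (HH.d2 h i) (HH.d2 g j) • HH.mul (HH.d1 h i) (HH.d1 g j)

/-- The convolution product of `σ, τ : H ⊗ H → k`. -/
def conv2 (HH : HomHopf k H) (σ τ : H → H → k) : H → H → k :=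
  fun h g => ∑ i ∈ HH.T h, ∑ j ∈ HH.T g,
    σ (HH.d1 h i) (HH.d1 g j) * τ (HH.d2 h i) (HH.d2 g j)

/-- The deformed multiplication `h ·_σ g = σ(h₁,g₁)α⁻¹(h₂g₂)` on `H`. -/
def mulSigma (HH : HomHopf k H) (σ : H → H → k) : H → H → H :=
  fun h g => ∑ i ∈ HH.T h, ∑ j ∈ HH.T g,
    σ (HH.d1 h i) (HH.d1 g j) • HH.α.symm (HH.mul (HH.d2 h i) (HH.d2 g j))

/-- The convolution product of `γ, δ : H → k`. -/
def conv1 (HH : HomHopf k H) (γ δ : H → k) : H → k :=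
  fun h => ∑ i ∈ HH.T h, γ (HH.d1 h i) * δ (HH.d2 h i)

/-- `δ` is the convolution inverse of `γ : H → k`. -/
def ConvInv1 (HH : HomHopf k H) (γ δ : H → k) : Prop :=
  (∀ h, conv1 HH γ δ h = HH.counit h) ∧ (∀ h, conv1 HH δ γ h = HH.counit h)

/-- `γ : H → k` is lazy: `γ(h₁)h₂ = h₁γ(h₂)`. -/
def IsLazy1 (HH : HomHopf k H) (γ : H → k) : Prop :=
  ∀ h, ∑ i ∈ HH.T h, γ (HH.d1 h i) • HH.d2 h i = ∑ i ∈ HH.T h, γ (HH.d2 h i) • HH.d1 h i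

/-- `D¹(γ)(h,g) = γ(h₁)γ(g₁)γ⁻¹(h₂g₂)` (with `δ` the convolution inverse of `γ`). -/
def D1 (HH : HomHopf k H) (γ δ : H → k) : H → H → k :=
  fun h g => ∑ i ∈ HH.T h, ∑ j ∈ HH.T g,
    γ (HH.d1 h i) * γ (HH.d1 g j) * δ (HH.mul (HH.d2 h i) (HH.d2 g j))

end Lazy


/-!
Applying the counit to the Hom-associativity identity gives the cocycle equation, because
`ε(h ·_σ g) = σ(h, g)`. Conversely, Hom-coassociativity turns `Δ(y ·_σ z)` into
`σ(y₁₁, z₁₁) α⁻¹(y₁₂z₁₂) ⊗ y₂z₂`. With it, `α(x) ·_σ (y ·_σ z)` becomes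
`σ(y₁₁, z₁₁) σ(α²x₁, y₁₂z₁₂) x₂ α⁻¹(y₂z₂)` and `(x ·_σ y) ·_σ α(z)` becomes
`σ(x₁₁, y₁₁) σ(x₁₂y₁₂, α²z₁) α⁻¹(x₂y₂) z₂`. These agree by the cocycle equation at
`(x₁, y₁, z₁)` and Hom-associativity of `H`.
-/

open TensorProduct

theorem Finset.sum_comm_pairs {M ι κ ι' κ' : Type*} [AddCommMonoid M] (s : Finset ι)
    (u : ι → Finset κ) (t : Finset ι') (v : ι' → Finset κ') (f : ι → κ → ι' → κ' → M) :
    ∑ a ∈ s, ∑ b ∈ u a, ∑ c ∈ t, ∑ d ∈ v c, f a b c d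
      = ∑ c ∈ t, ∑ d ∈ v c, ∑ a ∈ s, ∑ b ∈ u a, f a b c d :=
  calc _ = ∑ x ∈ s.sigma u, ∑ y ∈ t.sigma v, f x.1 x.2 y.1 y.2 := by simp only [Finset.sum_sigma]
    _ = ∑ y ∈ t.sigma v, ∑ x ∈ s.sigma u, f x.1 x.2 y.1 y.2 := Finset.sum_comm
    _ = _ := by simp only [Finset.sum_sigma]

section

variable {k : Type u} {H : Type v} [Field k] [AddCommGroup H] [Module k H]

namespace AlphaInvariant2

variable {HH : HomHopf k H} {σ : H → H → k}

theorem apply_symm_symm (hσ : AlphaInvariant2 HH σ) (a b : H) :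
    σ (HH.α.symm a) (HH.α.symm b) = σ a b := by
  simpa using (hσ (HH.α.symm a) (HH.α.symm b)).symm

theorem apply_alpha_symm (hσ : AlphaInvariant2 HH σ) (a b : H) :
    σ (HH.α a) (HH.α.symm b) = σ (HH.α (HH.α a)) b := by
  simpa using (hσ (HH.α a) (HH.α.symm b)).symm

theorem apply_symm_alpha (hσ : AlphaInvariant2 HH σ) (a b : H) :
    σ (HH.α.symm a) (HH.α b) = σ a (HH.α (HH.α b)) := by
  simpa using (hσ (HH.α.symm a) (HH.α b)).symm

end AlphaInvariant2

namespace HomHopf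

variable (HH : HomHopf k H)

theorem symm_mul (a b : H) :
    HH.α.symm (HH.mul a b) = HH.mul (HH.α.symm a) (HH.α.symm b) :=
  HH.α.injective <| by rw [HH.α_mul]; simp

theorem symm_mul_alpha_left (a b : H) :
    HH.α.symm (HH.mul (HH.α a) b) = HH.mul a (HH.α.symm b) := by
  rw [symm_mul, LinearEquiv.symm_apply_apply]

theorem symm_mul_alpha_right (a b : H) :
    HH.α.symm (HH.mul a (HH.α b)) = HH.mul (HH.α.symm a) b := by
  rw [symm_mul, LinearEquiv.symm_apply_apply]

theorem mul_symm_mul (a b c : H) :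
    HH.mul a (HH.α.symm (HH.mul b c)) = HH.mul (HH.α.symm (HH.mul a b)) c := by
  simpa [symm_mul] using HH.hom_assoc (HH.α.symm a) (HH.α.symm b) (HH.α.symm c)

theorem counit_symm (u : H) : HH.counit (HH.α.symm u) = HH.counit u := by
  simpa using (HH.counit_α (HH.α.symm u)).symm

theorem comul_alpha_eq_congr (h : H) :
    HH.comul (HH.α h) = TensorProduct.congr HH.α HH.α (HH.comul h) := by
  simp [HH.comul_α, HH.repr h]

theorem comul_symm (u : H) :
    HH.comul (HH.α.symm u) = (TensorProduct.congr HH.α HH.α).symm (HH.comul u) := by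
  rw [LinearEquiv.eq_symm_apply, ← comul_alpha_eq_congr, LinearEquiv.apply_symm_apply]

theorem sum_tmul_comul_d2 (w : H) :
    ∑ i ∈ HH.T w, ∑ p ∈ HH.T (HH.d2 w i),
        HH.d1 w i ⊗ₜ[k] (HH.d1 (HH.d2 w i) p ⊗ₜ[k] HH.d2 (HH.d2 w i) p)
      = ∑ i ∈ HH.T w, ∑ p ∈ HH.T (HH.d1 w i),
        HH.α.symm (HH.d1 (HH.d1 w i) p) ⊗ₜ[k] (HH.d2 (HH.d1 w i) p ⊗ₜ[k] HH.α (HH.d2 w i)) := by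
  have h := HH.hom_coassoc w
  simp only [HH.repr, sum_tmul, tmul_sum, map_sum, assoc_tmul] at h
  apply_fun map HH.α.symm.toLinearMap LinearMap.id at h
  simpa using h.symm

variable (σ : H →ₗ[k] H →ₗ[k] k)

/-- `mulSigma` is defined through the chosen decompositions of `Δh` and `Δg`; this map computes
it from any expression of `Δh ⊗ Δg`. -/
noncomputable def mulSigmaTensor : (H ⊗[k] H) ⊗[k] (H ⊗[k] H) →ₗ[k] H :=
  TensorProduct.lid k H ∘ₗ map (lift σ) (HH.α.symm.toLinearMap ∘ₗ lift HH.mul) ∘ₗ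
    (tensorTensorTensorComm k H H H H).toLinearMap

@[simp] theorem mulSigmaTensor_tmul (a b c d : H) :
    HH.mulSigmaTensor σ ((a ⊗ₜ b) ⊗ₜ (c ⊗ₜ d)) = σ a c • HH.α.symm (HH.mul b d) := by
  simp [mulSigmaTensor]

theorem mulSigma_eq_mulSigmaTensor (h g : H) :
    mulSigma HH (fun a b => σ a b) h g = HH.mulSigmaTensor σ (HH.comul h ⊗ₜ HH.comul g) := by
  simp only [mulSigma, HH.repr h, HH.repr g, tmul_sum, sum_tmul, map_sum, mulSigmaTensor_tmul]
  exact Finset.sum_comm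

/-- Expressing `Δ(y ·_σ z)` through this map lets Hom-coassociativity be substituted in `y` and
in `z` by rewriting its two tensor arguments. -/
noncomputable def comulMulSigmaTensor :
    (H ⊗[k] (H ⊗[k] H)) ⊗[k] (H ⊗[k] (H ⊗[k] H)) →ₗ[k] H ⊗[k] H :=
  TensorProduct.lid k (H ⊗[k] H) ∘ₗ
    map (lift σ) (map (HH.α.symm.toLinearMap ∘ₗ lift HH.mul)
      (HH.α.symm.toLinearMap ∘ₗ lift HH.mul) ∘ₗ (tensorTensorTensorComm k H H H H).toLinearMap) ∘ₗ
    (tensorTensorTensorComm k H (H ⊗[k] H) H (H ⊗[k] H)).toLinearMap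

@[simp] theorem comulMulSigmaTensor_tmul (a b c a' b' c' : H) :
    HH.comulMulSigmaTensor σ ((a ⊗ₜ (b ⊗ₜ c)) ⊗ₜ (a' ⊗ₜ (b' ⊗ₜ c')))
      = σ a a' • (HH.α.symm (HH.mul b b') ⊗ₜ HH.α.symm (HH.mul c c')) := by
  simp [comulMulSigmaTensor]

theorem comul_mulSigma_eq_comulMulSigmaTensor (y z : H) :
    HH.comul (mulSigma HH (fun a b => σ a b) y z)
      = HH.comulMulSigmaTensor σ
          ((∑ j ∈ HH.T y, ∑ p ∈ HH.T (HH.d2 y j),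
              HH.d1 y j ⊗ₜ[k] (HH.d1 (HH.d2 y j) p ⊗ₜ[k] HH.d2 (HH.d2 y j) p)) ⊗ₜ
            (∑ n ∈ HH.T z, ∑ q ∈ HH.T (HH.d2 z n),
              HH.d1 z n ⊗ₜ[k] (HH.d1 (HH.d2 z n) q ⊗ₜ[k] HH.d2 (HH.d2 z n) q))) := by
  simp only [mulSigma, map_sum, map_smul, comul_symm, comul_mul, congr_symm_tmul,
    Finset.smul_sum, tmul_sum, sum_tmul, comulMulSigmaTensor_tmul]
  rw [Finset.sum_comm_pairs]
  exact Finset.sum_congr rfl fun j _ => Finset.sum_comm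

variable {HH σ}

theorem comul_mulSigma (hσ : AlphaInvariant2 HH (fun h g => σ h g)) (y z : H) :
    HH.comul (mulSigma HH (fun a b => σ a b) y z)
      = ∑ j ∈ HH.T y, ∑ j' ∈ HH.T (HH.d1 y j), ∑ n ∈ HH.T z, ∑ n' ∈ HH.T (HH.d1 z n),
          σ (HH.d1 (HH.d1 y j) j') (HH.d1 (HH.d1 z n) n') •
            (HH.α.symm (HH.mul (HH.d2 (HH.d1 y j) j') (HH.d2 (HH.d1 z n) n')) ⊗ₜ[k]
              HH.mul (HH.d2 y j) (HH.d2 z n)) := by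
  rw [comul_mulSigma_eq_comulMulSigmaTensor, sum_tmul_comul_d2, sum_tmul_comul_d2]
  -- `sum_tmul` before `tmul_sum`, so that the sums of the left factor come out outermost.
  simp only [sum_tmul]
  simp [tmul_sum, hσ.apply_symm_symm, ← HH.α_mul]

theorem mulSigma_alpha_mulSigma (hσ : AlphaInvariant2 HH (fun h g => σ h g)) (x y z : H) :
    mulSigma HH (fun a b => σ a b) (HH.α x) (mulSigma HH (fun a b => σ a b) y z)
      = ∑ i ∈ HH.T x, ∑ j ∈ HH.T y, ∑ n ∈ HH.T z,
          (∑ j' ∈ HH.T (HH.d1 y j), ∑ n' ∈ HH.T (HH.d1 z n),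
            σ (HH.d1 (HH.d1 y j) j') (HH.d1 (HH.d1 z n) n') *
              σ (HH.α (HH.α (HH.d1 x i))) (HH.mul (HH.d2 (HH.d1 y j) j') (HH.d2 (HH.d1 z n) n'))) •
            HH.mul (HH.d2 x i) (HH.α.symm (HH.mul (HH.d2 y j) (HH.d2 z n))) := by
  rw [mulSigma_eq_mulSigmaTensor, HH.comul_α, comul_mulSigma hσ]
  simp only [sum_tmul]
  simp only [tmul_sum, map_sum, Finset.sum_smul]
  refine Finset.sum_congr rfl fun i _ => Finset.sum_congr rfl fun j _ => ?_
  rw [Finset.sum_comm]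
  simp [smul_smul, hσ.apply_alpha_symm, symm_mul_alpha_left]

theorem mulSigma_mulSigma_alpha (hσ : AlphaInvariant2 HH (fun h g => σ h g)) (x y z : H) :
    mulSigma HH (fun a b => σ a b) (mulSigma HH (fun a b => σ a b) x y) (HH.α z)
      = ∑ i ∈ HH.T x, ∑ j ∈ HH.T y, ∑ n ∈ HH.T z,
          (∑ i' ∈ HH.T (HH.d1 x i), ∑ j' ∈ HH.T (HH.d1 y j),
            σ (HH.d1 (HH.d1 x i) i') (HH.d1 (HH.d1 y j) j') *
              σ (HH.mul (HH.d2 (HH.d1 x i) i') (HH.d2 (HH.d1 y j) j')) (HH.α (HH.α (HH.d1 z n)))) •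
            HH.mul (HH.α.symm (HH.mul (HH.d2 x i) (HH.d2 y j))) (HH.d2 z n) := by
  rw [mulSigma_eq_mulSigmaTensor, HH.comul_α, comul_mulSigma hσ]
  simp only [sum_tmul]
  simp only [tmul_sum, map_sum, Finset.sum_smul]
  refine Finset.sum_congr rfl fun i _ => ?_
  rw [Finset.sum_comm]
  refine Finset.sum_congr rfl fun j _ => ?_
  simp_rw [Finset.sum_comm (s := HH.T (HH.d1 y j)) (t := HH.T z)]
  rw [Finset.sum_comm]
  simp [← smul_tmul', smul_smul, hσ.apply_symm_alpha, symm_mul_alpha_right]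

theorem counit_mulSigma (hσ : AlphaInvariant2 HH (fun h g => σ h g)) (h g : H) :
    HH.counit (mulSigma HH (fun a b => σ a b) h g) = σ h g :=
  calc HH.counit (mulSigma HH (fun a b => σ a b) h g)
      = σ (∑ i ∈ HH.T h, HH.counit (HH.d2 h i) • HH.d1 h i)
          (∑ j ∈ HH.T g, HH.counit (HH.d2 g j) • HH.d1 g j) := by
        simp only [mulSigma, map_sum, map_smul, LinearMap.sum_apply, LinearMap.smul_apply,
          counit_symm, counit_mul, smul_eq_mul, Finset.mul_sum]
        rw [Finset.sum_comm]
        exact Finset.sum_congr rfl fun j _ => Finset.sum_congr rfl fun i _ => by ring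
    _ = σ h g := by rw [HH.counit_right, HH.counit_right]; exact hσ h g

end HomHopf

end

/-- For a linear functional `σ : H ⊗ H → k` with `σ∘(α⊗α) = σ`,
the deformed multiplication `h ·_σ g = σ(h₁,g₁)α⁻¹(h₂g₂)` is Hom-associative
(`α(h)·(g·l) = (h·g)·α(l)`) if and only if `σ` satisfies the left Hom-2-cocycle
equation `σ(l₁,k₁)σ(α²(h), l₂k₂) = σ(h₁,l₁)σ(h₂l₂, α²(k))`. -/
theorem mulSigma_homAssoc_iff_leftCocycle
    {k : Type u} {H : Type v} [Field k] [AddCommGroup H] [Module k H]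
    (HH : HomHopf k H) (σ : H →ₗ[k] H →ₗ[k] k)
    (hα : AlphaInvariant2 HH (fun h g => σ h g)) :
    (∀ x y z : H,
        mulSigma HH (fun h g => σ h g) (HH.α x) (mulSigma HH (fun h g => σ h g) y z)
          = mulSigma HH (fun h g => σ h g) (mulSigma HH (fun h g => σ h g) x y) (HH.α z))
    ↔ LeftCocycleEq HH (fun h g => σ h g) := by
  constructor
  · intro hassoc h l m
    have hε := congrArg HH.counit (hassoc h l m)
    rw [HomHopf.counit_mulSigma hα, HomHopf.counit_mulSigma hα] at hε
    simpa [mulSigma, hα.apply_alpha_symm, hα.apply_symm_alpha] using hε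
  · intro hcocycle x y z
    rw [HomHopf.mulSigma_alpha_mulSigma hα, HomHopf.mulSigma_mulSigma_alpha hα]
    refine Finset.sum_congr rfl fun i _ => Finset.sum_congr rfl fun j _ =>
      Finset.sum_congr rfl fun n _ => ?_
    rw [hcocycle, HH.mul_symm_mul]
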